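/- Let f(x) = W·z(x) with z(x) ∈ ℝ^d, and suppose the network is L-Lipschitz: ‖f(x₁) - f(x₂)‖ ≤ L‖x₁ - x₂‖. If input x is classified as class p with output margin m(x) = min_{q≠p} (f(x)_p - f(x)_q) > 0, then any perturbation η with ‖η‖ < m(x)/(√2 · L) cannot change the predicted class: for all q ≠ p, f(x+η)_p > f(x+η)_q. -/
import Mathlib

theorem robustness_from_lipschitz_and_margin
    (n K : ℕ)
    (f : EuclideanSpace ℝ (Fin n) → EuclideanSpace ℝ (Fin K))
    (L : ℝ) (hL : 0 < L)
    (hf : ∀ x₁ x₂, ‖f x₁ - f x₂‖ ≤ L * ‖x₁ - x₂‖)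
    (x : EuclideanSpace ℝ (Fin n)) (p : Fin K)
    (m : ℝ) (hm : 0 < m)
    (hmargin : ∀ q, q ≠ p → m ≤ f x p - f x q) :
    ∀ η : EuclideanSpace ℝ (Fin n), ‖η‖ < m / (Real.sqrt 2 * L) →
      ∀ q, q ≠ p → f (x + η) q < f (x + η) p := by
  intro η hη q hq
  set v : EuclideanSpace ℝ (Fin K) := f (x + η) - f x with hv
  have hvp : v p = f (x + η) p - f x p := rfl
  have hvq : v q = f (x + η) q - f x q := rfl
  -- coordinate bound: v p ^ 2 + v q ^ 2 ≤ ‖v‖ ^ 2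
  have hcoord : v p ^ 2 + v q ^ 2 ≤ ‖v‖ ^ 2 := by
    have := EuclideanSpace.norm_eq v
    have hsum : ‖v‖ ^ 2 = ∑ i, ‖v i‖ ^ 2 := by
      rw [this, Real.sq_sqrt]
      positivity
    rw [hsum]
    have : v p ^ 2 + v q ^ 2 = ∑ i ∈ ({p, q} : Finset (Fin K)), ‖v i‖ ^ 2 := by
      rw [Finset.sum_pair (Ne.symm hq)]
      simp [sq_abs]
    rw [this]
    exact Finset.sum_le_sum_of_subset_of_nonneg (Finset.subset_univ _)
      (fun i _ _ => by positivity)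
  have hkey : |v p - v q| ≤ Real.sqrt 2 * ‖v‖ := by
    have h1 : (v p - v q) ^ 2 ≤ 2 * ‖v‖ ^ 2 := by nlinarith [sq_nonneg (v p + v q)]
    have h2 : |v p - v q| = Real.sqrt ((v p - v q) ^ 2) := (Real.sqrt_sq_eq_abs _).symm
    rw [h2]
    calc Real.sqrt ((v p - v q) ^ 2) ≤ Real.sqrt (2 * ‖v‖ ^ 2) := Real.sqrt_le_sqrt h1
      _ = Real.sqrt 2 * ‖v‖ := by
          rw [Real.sqrt_mul (by norm_num), Real.sqrt_sq (norm_nonneg _)]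
  have hLip : ‖v‖ ≤ L * ‖η‖ := by
    have := hf (x + η) x
    simpa using this
  have hsqrt2 : (0:ℝ) < Real.sqrt 2 := Real.sqrt_pos.mpr (by norm_num)
  have hbound : Real.sqrt 2 * ‖v‖ < m := by
    have h3 : Real.sqrt 2 * (L * ‖η‖) < m := by
      have := (lt_div_iff₀ (by positivity)).mp hη
      nlinarith
    nlinarith [norm_nonneg v]
  have hmq := hmargin q hq
  have habs := abs_lt.mp (lt_of_le_of_lt hkey hbound)
  rw [hvp, hvq] at habs
  linarith [habs.1, habs.2]
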